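/- Let I = (𝔼, D, c, f) be a CMP instance whose objective f is of type bottleneck, write c* := f(I), and for e ∈ 𝔼 define g(e) := min_{S ∈ D+(e)} max_{a ∈ S ∖ {e}} c(a) if D+(e) ≠ ∅ (with the maximum over the empty set taken as −∞) and g(e) := ∞ if D+(e) = ∅. Then for every e ∈ 𝔼: l'(I,e) = c(e) − c* if g(e) < c*, and l'(I,e) = ∞ otherwise. -/

import Mathlib

/-!
Lowering `c e` by `a ≥ 0` leaves the costs of solutions avoiding `e` unchanged, and a solution
`S ∋ e` then costs `max (c e - a) (max_{S ∖ {e}} c)`. So the optimum stays `c*` iff every `S ∋ e`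
has `c* ≤ c e - a` or another element of cost at least `c*`. If `g(e) ≥ c*` the second
alternative always holds and every `a ≥ 0` is admissible; if `g(e) < c*`, a solution `S ∋ e`
whose other elements all cost less than `c*` makes the admissible `a` exactly `[0, c e - c*]`.
-/

open scoped ENNReal BigOperators

/-- Objective type of a combinatorial minimization problem:
sum, product, or bottleneck. -/
inductive ObjType where
  | sum : ObjType
  | prod : ObjType
  | bottleneck : ObjType
deriving DecidableEq

/-- The cost `f_c(S)` of a feasible solution `S` under cost function `c`:
the sum, the product, or the maximum (for nonempty `S`) of the element costs. -/
noncomputable def objCost {ι : Type*} (t : ObjType) (c : ι → ℝ) (S : Finset ι) : ℝ :=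
  match t with
  | ObjType.sum => ∑ e ∈ S, c e
  | ObjType.prod => ∏ e ∈ S, c e
  | ObjType.bottleneck => if h : S.Nonempty then S.sup' h c else 0

/-- The optimal objective value `f(I)` of the instance with feasible set `D`. -/
noncomputable def optVal {ι : Type*} (t : ObjType) (c : ι → ℝ) (D : Finset (Finset ι)) : ℝ :=
  if h : D.Nonempty then D.inf' h (objCost t c) else 0

/-- `S` is an optimal solution of the instance `(𝔼, D, c, f)`. -/
def isOpt {ι : Type*} (t : ObjType) (c : ι → ℝ) (D : Finset (Finset ι)) (S : Finset ι) : Prop :=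
  S ∈ D ∧ objCost t c S = optVal t c D

/-- `0 ≤ a < maxdec(e)`, where `maxdec(e) = ∞` for sum/bottleneck objectives and
`maxdec(e) = c(e)` for the product objective. -/
def decOK {ι : Type*} (t : ObjType) (c : ι → ℝ) (e : ι) (a : ℝ) : Prop :=
  0 ≤ a ∧ (t = ObjType.prod → a < c e)

/-- Extended single upper tolerance
`u'(I,e) = sup {α ≥ 0 : every optimal solution of I is optimal for I_{α,e}}` valued in `[0,∞]`. -/
noncomputable def uTol {ι : Type*} [DecidableEq ι] (t : ObjType) (c : ι → ℝ)
    (D : Finset (Finset ι)) (e : ι) : ℝ≥0∞ :=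
  sSup (ENNReal.ofReal '' {a : ℝ | 0 ≤ a ∧
    ∀ S : Finset ι, isOpt t c D S →
      isOpt t (fun x => if x = e then c x + a else c x) D S})

/-- Extended regular set upper tolerance `u'(I,E)`, valued in `[0,∞]`. -/
noncomputable def uTolSet {ι : Type*} [DecidableEq ι] (t : ObjType) (c : ι → ℝ)
    (D : Finset (Finset ι)) (E : Finset ι) : ℝ≥0∞ :=
  sSup (ENNReal.ofReal '' {a : ℝ |
    ∀ S : Finset ι, isOpt t c D S →
      ∃ α : ι → ℝ, (∀ x, 0 ≤ α x) ∧ (∀ x ∉ E, α x = 0) ∧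
        a = ∑ x ∈ E, α x ∧ isOpt t (fun x => c x + α x) D S})

/-- Extended reverse set upper tolerance `u_b'(I,E)`, valued in `[0,∞]` (`inf ∅ = ∞`). -/
noncomputable def uTolSetRev {ι : Type*} [DecidableEq ι] (t : ObjType) (c : ι → ℝ)
    (D : Finset (Finset ι)) (E : Finset ι) : ℝ≥0∞ :=
  sInf (ENNReal.ofReal '' {a : ℝ |
    ∃ S : Finset ι, isOpt t c D S ∧
      ∃ α : ι → ℝ, (∀ x, 0 ≤ α x) ∧ (∀ x ∉ E, α x = 0) ∧
        a = ∑ x ∈ E, α x ∧ ¬ isOpt t (fun x => c x + α x) D S})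

/-- New single lower tolerance
`l'(I,e) = sup {α : 0 ≤ α < maxdec(e), f(I_{−α,e}) = f(I)}`, valued in `[0,∞]`. -/
noncomputable def lTol {ι : Type*} [DecidableEq ι] (t : ObjType) (c : ι → ℝ)
    (D : Finset (Finset ι)) (e : ι) : ℝ≥0∞ :=
  sSup (ENNReal.ofReal '' {a : ℝ | decOK t c e a ∧
    optVal t (fun x => if x = e then c x - a else c x) D = optVal t c D})

/-- New regular set lower tolerance `l'(I,E)`, valued in `[0,∞]`. -/
noncomputable def lTolSet {ι : Type*} [DecidableEq ι] (t : ObjType) (c : ι → ℝ)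
    (D : Finset (Finset ι)) (E : Finset ι) : ℝ≥0∞ :=
  sSup (ENNReal.ofReal '' {a : ℝ |
    ∃ α : ι → ℝ, (∀ x ∈ E, decOK t c x (α x)) ∧ (∀ x ∉ E, α x = 0) ∧
      a = ∑ x ∈ E, α x ∧ optVal t (fun x => c x - α x) D = optVal t c D})

/-- New reverse set lower tolerance `l_b'(I,E)`, valued in `[0,∞]` (`inf ∅ = ∞`). -/
noncomputable def lTolSetRev {ι : Type*} [DecidableEq ι] (t : ObjType) (c : ι → ℝ)
    (D : Finset (Finset ι)) (E : Finset ι) : ℝ≥0∞ :=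
  sInf (ENNReal.ofReal '' {a : ℝ |
    ∃ α : ι → ℝ, (∀ x ∈ E, decOK t c x (α x)) ∧ (∀ x ∉ E, α x = 0) ∧
      a = ∑ x ∈ E, α x ∧ optVal t (fun x => c x - α x) D < optVal t c D})


/-- `g(e) := min_{S ∈ D⁺(e)} max_{a ∈ S \ {e}} c(a)` (maximum over the empty
set is `−∞`), and `g(e) := ∞` if `D⁺(e) = ∅`; valued in the extended reals. -/
noncomputable def gBottl {ι : Type*} [DecidableEq ι] (c : ι → ℝ)
    (D : Finset (Finset ι)) (e : ι) : EReal :=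
  if h : (D.filter fun S => e ∈ S).Nonempty then
    (D.filter fun S => e ∈ S).inf' h (fun S => (S.erase e).sup (fun a => (c a : EReal)))
  else ⊤

section

variable {ι : Type*}

theorem objCost_congr (t : ObjType) {c c' : ι → ℝ} {S : Finset ι}
    (h : ∀ x ∈ S, c x = c' x) : objCost t c S = objCost t c' S := by
  cases t with
  | sum => exact Finset.sum_congr rfl h
  | prod => exact Finset.prod_congr rfl h
  | bottleneck =>
    unfold objCost
    split_ifs with hS
    · exact Finset.sup'_congr hS rfl h
    · rfl

theorem objCost_bottleneck_mono {c c' : ι → ℝ} (h : ∀ x, c' x ≤ c x)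
    (S : Finset ι) : objCost .bottleneck c' S ≤ objCost .bottleneck c S := by
  unfold objCost
  split_ifs with hS
  · exact Finset.sup'_mono_fun fun x _ => h x
  · rfl

theorem le_objCost_bottleneck_iff {c : ι → ℝ} {S : Finset ι} (hS : S.Nonempty)
    {r : ℝ} : r ≤ objCost .bottleneck c S ↔ ∃ x ∈ S, r ≤ c x := by
  rw [objCost, dif_pos hS, Finset.le_sup'_iff]

theorem optVal_le_objCost (t : ObjType) (c : ι → ℝ) {D : Finset (Finset ι)}
    {S : Finset ι} (hS : S ∈ D) : optVal t c D ≤ objCost t c S := by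
  rw [optVal, dif_pos ⟨S, hS⟩]
  exact Finset.inf'_le _ hS

theorem le_optVal_iff (t : ObjType) (c : ι → ℝ) {D : Finset (Finset ι)}
    (hD : D.Nonempty) {r : ℝ} : r ≤ optVal t c D ↔ ∀ S ∈ D, r ≤ objCost t c S := by
  rw [optVal, dif_pos hD, Finset.le_inf'_iff]

theorem optVal_eq_iff_of_le_of_eq_off (t : ObjType) {c c' : ι → ℝ}
    {D : Finset (Finset ι)} {e : ι} (hle : ∀ S ∈ D, objCost t c' S ≤ objCost t c S)
    (heq : ∀ S ∈ D, e ∉ S → objCost t c' S = objCost t c S) :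
    optVal t c' D = optVal t c D ↔ ∀ S ∈ D, e ∈ S → optVal t c D ≤ objCost t c' S := by
  refine ⟨fun h S hS _ => h ▸ optVal_le_objCost t c' hS, fun h => ?_⟩
  rcases D.eq_empty_or_nonempty with rfl | hD
  · simp [optVal]
  refine le_antisymm ?_ ((le_optVal_iff t c' hD).2 fun S hS => ?_)
  · rw [le_optVal_iff t c hD]
    exact fun S hS => (optVal_le_objCost t c' hS).trans (hle S hS)
  · by_cases he : e ∈ S
    · exact h S hS he
    · exact (heq S hS he).symm ▸ optVal_le_objCost t c hS

theorem optVal_bottleneck_lower_eq_iff [DecidableEq ι] (c : ι → ℝ)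
    (D : Finset (Finset ι)) (e : ι) {a : ℝ} (ha : 0 ≤ a) :
    optVal .bottleneck (fun x => if x = e then c x - a else c x) D = optVal .bottleneck c D ↔
      ∀ S ∈ D, e ∈ S →
        optVal .bottleneck c D ≤ c e - a ∨ ∃ x ∈ S.erase e, optVal .bottleneck c D ≤ c x := by
  have hlower : ∀ x, (if x = e then c x - a else c x) ≤ c x := fun x => by
    split_ifs <;> linarith
  rw [optVal_eq_iff_of_le_of_eq_off _ (fun S _ => objCost_bottleneck_mono hlower S)
    fun S _ he => objCost_congr _ fun x hx => if_neg (ne_of_mem_of_not_mem hx he)]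
  refine forall₂_congr fun S _ => imp_congr_right fun he => ?_
  rw [le_objCost_bottleneck_iff ⟨e, he⟩]
  conv_lhs => rw [← Finset.insert_erase he, Finset.exists_mem_insert, if_pos rfl]
  refine or_congr_right (exists_congr fun x => and_congr_right fun hx => ?_)
  rw [if_neg (Finset.ne_of_mem_erase hx)]

theorem gBottl_lt_iff [DecidableEq ι] (c : ι → ℝ) (D : Finset (Finset ι)) (e : ι)
    (r : ℝ) : gBottl c D e < r ↔ ∃ S ∈ D, e ∈ S ∧ ∀ x ∈ S.erase e, c x < r := by
  unfold gBottl
  split_ifs with h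
  · simp only [Finset.inf'_lt_iff, Finset.mem_filter, and_assoc,
      Finset.sup_lt_iff (EReal.bot_lt_coe r), EReal.coe_lt_coe_iff]
  · simp only [not_top_lt, false_iff, not_exists, not_and]
    exact fun S hS he _ => h ⟨S, Finset.mem_filter.2 ⟨hS, he⟩⟩

theorem sSup_ofReal_image_Icc_zero (b : ℝ) :
    sSup (ENNReal.ofReal '' Set.Icc 0 b) = ENNReal.ofReal b := by
  rcases lt_or_ge b 0 with hb | hb
  · rw [Set.Icc_eq_empty hb.not_ge, Set.image_empty, sSup_empty, ENNReal.ofReal_of_nonpos hb.le,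
      bot_eq_zero]
  · exact (ENNReal.ofReal_mono.map_isGreatest (isGreatest_Icc hb)).csSup_eq

theorem sSup_ofReal_image_Ici (a : ℝ) : sSup (ENNReal.ofReal '' Set.Ici a) = ⊤ := by
  refine sSup_eq_top.2 fun b hb => ⟨_, Set.mem_image_of_mem _ (le_max_left a (b.toReal + 1)), ?_⟩
  rw [ENNReal.lt_ofReal_iff_toReal_lt hb.ne]
  exact (lt_add_one _).trans_le (le_max_right _ _)

end

theorem lsi_formula_bottleneck_general {ι : Type*} [DecidableEq ι]
    (c : ι → ℝ) (D : Finset (Finset ι)) :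
    ∀ e : ι, lTol ObjType.bottleneck c D e =
      if gBottl c D e < ((optVal ObjType.bottleneck c D : ℝ) : EReal) then
        ENNReal.ofReal (c e - optVal ObjType.bottleneck c D)
      else ⊤ := by
  intro e
  unfold lTol
  set cs := optVal ObjType.bottleneck c D
  have hset : {a | decOK .bottleneck c e a ∧
      optVal .bottleneck (fun x => if x = e then c x - a else c x) D = cs} =
      {a | 0 ≤ a ∧ ∀ S ∈ D, e ∈ S → cs ≤ c e - a ∨ ∃ x ∈ S.erase e, cs ≤ c x} := by
    ext a
    simp only [Set.mem_ofPred_eq, decOK, reduceCtorEq, false_imp_iff, and_true]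
    exact and_congr_right (optVal_bottleneck_lower_eq_iff c D e)
  rw [hset]
  split_ifs with hg
  · obtain ⟨S₀, hS₀, heS₀, hlt⟩ := (gBottl_lt_iff c D e cs).1 hg
    convert sSup_ofReal_image_Icc_zero (c e - cs) using 3
    ext a
    simp only [Set.mem_ofPred_eq, Set.mem_Icc]
    refine and_congr_right fun _ => ⟨fun h => ?_, fun h S _ _ => Or.inl (by linarith)⟩
    rcases h S₀ hS₀ heS₀ with h | ⟨x, hx, hcx⟩
    · linarith
    · exact absurd (hlt x hx) hcx.not_gt
  · simp only [gBottl_lt_iff, not_exists, not_and, not_forall, not_lt, exists_prop] at hg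
    convert sSup_ofReal_image_Ici 0 using 3
    ext a
    simp only [Set.mem_ofPred_eq, Set.mem_Ici, and_iff_left_iff_imp]
    exact fun _ S hS he => Or.inr (hg S hS he)

/-- Theorem 5(d): for a bottleneck objective with optimal value `c* = f(I)`,
`l'(I,e) = c(e) − c*` if `g(e) < c*`, and `l'(I,e) = ∞` otherwise. -/
theorem lsi_formula_bottleneck {ι : Type*} [Fintype ι] [DecidableEq ι]
    (c : ι → ℝ) (D : Finset (Finset ι))
    (hD : D.Nonempty) (hSne : ∀ S ∈ D, S.Nonempty) :
    ∀ e : ι, lTol ObjType.bottleneck c D e =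
      if gBottl c D e < ((optVal ObjType.bottleneck c D : ℝ) : EReal) then
        ENNReal.ofReal (c e - optVal ObjType.bottleneck c D)
      else ⊤ :=
  lsi_formula_bottleneck_general c D
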